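/- The class of posets equipped with a closure operation has the superamalgamation property: for all posets A, B, C with closure operations c_A, c_B, c_C, and order embeddings f : C → A, g : C → B with f(c_C(x)) = c_A(f(x)) and g(c_C(x)) = c_B(g(x)) for all x ∈ C, there exist a poset D with a closure operation c_D and order embeddings h : A → D, k : B → D with h(c_A(a)) = c_D(h(a)) and k(c_B(b)) = c_D(k(b)), such that h ∘ f = k ∘ g; whenever h(a) = k(b) there is c ∈ C with a = f(c) and b = g(c); whenever h(a) ≤ k(b) there is c ∈ C with a ≤ f(c) and g(c) ≤ b; and whenever k(b) ≤ h(a) there is c ∈ C with b ≤ g(c) and f(c) ≤ a. -/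

import Mathlib

/-!
The amalgam is the disjoint union `A ⊕ B`, preordered by the orders of `A` and `B` together with
`a ≤ b ↔ ∃ c, a ≤ f c ∧ g c ≤ b` and `b ≤ a ↔ ∃ c, b ≤ g c ∧ f c ≤ a`; this is transitive because
`f` and `g` reflect the order. Its antisymmetrization `D` identifies `a` with `b` exactly when
`a = f c` and `b = g c`, and the superamalgamation conditions then hold by construction. The
closure of `D` is induced by `cA ⊕ cB`, which is monotone across the two summands because `f` and
`g` carry `cC` to `cA` and `cB`: the witness `c` of `a ≤ b` becomes the witness `cC c` of
`cA a ≤ cB b`.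
-/

universe u

variable {A B C : Type*}

def PreAmalgam [Preorder A] [Preorder B] [Preorder C] (_f : C ↪o A) (_g : C ↪o B) : Type _ :=
  A ⊕ B

namespace PreAmalgam

variable [Preorder A] [Preorder B] [Preorder C] (f : C ↪o A) (g : C ↪o B)

protected def LE : PreAmalgam f g → PreAmalgam f g → Prop
  | .inl a, .inl a' => a ≤ a'
  | .inl a, .inr b => ∃ c, a ≤ f c ∧ g c ≤ b
  | .inr b, .inl a => ∃ c, b ≤ g c ∧ f c ≤ a
  | .inr b, .inr b' => b ≤ b'

variable {f g}

lemma map_le_map_of_le_of_le {c c' : C} {b : B} (h : g c ≤ b) (h' : b ≤ g c') : f c ≤ f c' :=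
  f.le_iff_le.2 (g.le_iff_le.1 (h.trans h'))

protected lemma le_refl : ∀ x, PreAmalgam.LE f g x x
  | .inl a => le_refl a
  | .inr b => le_refl b

protected lemma le_trans : ∀ x y z, PreAmalgam.LE f g x y → PreAmalgam.LE f g y z →
    PreAmalgam.LE f g x z
  | .inl _, .inl _, .inl _, h, h' => h.trans h'
  | .inl _, .inl _, .inr _, h, ⟨c, h₁, h₂⟩ => ⟨c, h.trans h₁, h₂⟩
  | .inl _, .inr _, .inl _, ⟨_, h₁, h₂⟩, ⟨_, h₁', h₂'⟩ =>
      h₁.trans ((map_le_map_of_le_of_le h₂ h₁').trans h₂')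
  | .inl _, .inr _, .inr _, ⟨c, h₁, h₂⟩, h' => ⟨c, h₁, h₂.trans h'⟩
  | .inr _, .inl _, .inl _, ⟨c, h₁, h₂⟩, h' => ⟨c, h₁, h₂.trans h'⟩
  | .inr _, .inl _, .inr _, ⟨_, h₁, h₂⟩, ⟨_, h₁', h₂'⟩ =>
      h₁.trans ((map_le_map_of_le_of_le h₂ h₁').trans h₂')
  | .inr _, .inr _, .inl _, h, ⟨c, h₁, h₂⟩ => ⟨c, h.trans h₁, h₂⟩
  | .inr _, .inr _, .inr _, h, h' => h.trans h'

instance : Preorder (PreAmalgam f g) where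
  le := PreAmalgam.LE f g
  le_refl := PreAmalgam.le_refl
  le_trans := PreAmalgam.le_trans

lemma sumMap_le_sumMap {cA : A → A} {cB : B → B} {cC : C → C} (hA : Monotone cA)
    (hB : Monotone cB) (hf : ∀ x, f (cC x) = cA (f x)) (hg : ∀ x, g (cC x) = cB (g x)) :
    ∀ x y, PreAmalgam.LE f g x y → PreAmalgam.LE f g (Sum.map cA cB x) (Sum.map cA cB y)
  | .inl _, .inl _, h => hA h
  | .inl _, .inr _, ⟨c, h₁, h₂⟩ => ⟨cC c, hf c ▸ hA h₁, hg c ▸ hB h₂⟩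
  | .inr _, .inl _, ⟨c, h₁, h₂⟩ => ⟨cC c, hg c ▸ hB h₁, hf c ▸ hA h₂⟩
  | .inr _, .inr _, h => hB h

variable (f g) in
def closure (cA : ClosureOperator A) (cB : ClosureOperator B) (cC : C → C)
    (hf : ∀ x, f (cC x) = cA (f x)) (hg : ∀ x, g (cC x) = cB (g x)) :
    ClosureOperator (PreAmalgam f g) where
  toFun := Sum.map cA cB
  monotone' := sumMap_le_sumMap cA.monotone cB.monotone hf hg
  le_closure' := by rintro (a | b); exacts [cA.le_closure a, cB.le_closure b]
  idempotent' := by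
    rintro (a | b)
    exacts [congrArg Sum.inl (cA.idempotent a), congrArg Sum.inr (cB.idempotent b)]

end PreAmalgam

def ClosureOperator.antisymmetrization {α : Type*} [Preorder α] (c : ClosureOperator α) :
    ClosureOperator (Antisymmetrization α (· ≤ ·)) :=
  .mk' c.toOrderHom.antisymmetrization (OrderHom.monotone _)
    (by intro x; induction x using Antisymmetrization.ind; exact c.le_closure _)
    (by intro x; induction x using Antisymmetrization.ind; exact (c.idempotent _).le)

abbrev Amalgam [Preorder A] [Preorder B] [Preorder C] (f : C ↪o A) (g : C ↪o B) : Type _ :=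
  Antisymmetrization (PreAmalgam f g) (· ≤ ·)

namespace Amalgam

section Embeddings

variable [PartialOrder A] [PartialOrder B] [Preorder C] (f : C ↪o A) (g : C ↪o B)

def inl : A ↪o Amalgam f g :=
  .ofMapLEIff (fun a ↦ toAntisymmetrization _ (.inl a : PreAmalgam f g)) fun _ _ ↦ Iff.rfl

def inr : B ↪o Amalgam f g :=
  .ofMapLEIff (fun b ↦ toAntisymmetrization _ (.inr b : PreAmalgam f g)) fun _ _ ↦ Iff.rfl

def closure (cA : ClosureOperator A) (cB : ClosureOperator B) (cC : C → C)
    (hf : ∀ x, f (cC x) = cA (f x)) (hg : ∀ x, g (cC x) = cB (g x)) :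
    ClosureOperator (Amalgam f g) :=
  (PreAmalgam.closure f g cA cB cC hf hg).antisymmetrization

variable {f g}

lemma inl_le_inr_iff {a : A} {b : B} : inl f g a ≤ inr f g b ↔ ∃ c, a ≤ f c ∧ g c ≤ b :=
  Iff.rfl

lemma inr_le_inl_iff {a : A} {b : B} : inr f g b ≤ inl f g a ↔ ∃ c, b ≤ g c ∧ f c ≤ a :=
  Iff.rfl

lemma inl_map_eq_inr_map (c : C) : inl f g (f c) = inr f g (g c) :=
  le_antisymm (inl_le_inr_iff.2 ⟨c, le_rfl, le_rfl⟩) (inr_le_inl_iff.2 ⟨c, le_rfl, le_rfl⟩)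

variable {cA : ClosureOperator A} {cB : ClosureOperator B} {cC : C → C}
  {hf : ∀ x, f (cC x) = cA (f x)} {hg : ∀ x, g (cC x) = cB (g x)}

lemma closure_inl (a : A) : closure f g cA cB cC hf hg (inl f g a) = inl f g (cA a) :=
  rfl

lemma closure_inr (b : B) : closure f g cA cB cC hf hg (inr f g b) = inr f g (cB b) :=
  rfl

end Embeddings

lemma exists_eq_of_inl_eq_inr [PartialOrder A] [PartialOrder B] [PartialOrder C] {f : C ↪o A}
    {g : C ↪o B} {a : A} {b : B} (h : inl f g a = inr f g b) : ∃ c, a = f c ∧ b = g c := by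
  obtain ⟨c, hac, hcb⟩ := inl_le_inr_iff.1 h.le
  obtain ⟨c', hbc', hc'a⟩ := inr_le_inl_iff.1 h.ge
  obtain rfl : c = c' :=
    le_antisymm (g.le_iff_le.1 (hcb.trans hbc')) (f.le_iff_le.1 (hc'a.trans hac))
  exact ⟨c, le_antisymm hac hc'a, le_antisymm hbc' hcb⟩

end Amalgam

theorem poset_with_closure_superamalgamation_general {A B C : Type u}
    [PartialOrder A] [PartialOrder B] [PartialOrder C]
    (cA : A → A) (cB : B → B) (cC : C → C)
    (hAext : ∀ x, x ≤ cA x) (hAmono : Monotone cA) (hAidem : ∀ x, cA (cA x) = cA x)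
    (hBext : ∀ x, x ≤ cB x) (hBmono : Monotone cB) (hBidem : ∀ x, cB (cB x) = cB x)
    (f : C ↪o A) (g : C ↪o B)
    (hfc : ∀ x, f (cC x) = cA (f x)) (hgc : ∀ x, g (cC x) = cB (g x)) :
    ∃ (D : Type u) (_ : PartialOrder D) (cD : D → D) (h : A ↪o D) (k : B ↪o D),
      (∀ x, x ≤ cD x) ∧ Monotone cD ∧ (∀ x, cD (cD x) = cD x) ∧
      (∀ a, h (cA a) = cD (h a)) ∧ (∀ b, k (cB b) = cD (k b)) ∧
      (∀ c, h (f c) = k (g c)) ∧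
      (∀ a b, h a = k b → ∃ c, a = f c ∧ b = g c) ∧
      (∀ a b, h a ≤ k b → ∃ c, a ≤ f c ∧ g c ≤ b) ∧
      (∀ a b, k b ≤ h a → ∃ c, b ≤ g c ∧ f c ≤ a) := by
  let clA := ClosureOperator.mk' cA hAmono hAext fun x ↦ (hAidem x).le
  let clB := ClosureOperator.mk' cB hBmono hBext fun x ↦ (hBidem x).le
  let cD := Amalgam.closure f g clA clB cC hfc hgc
  exact ⟨Amalgam f g, inferInstance, cD, Amalgam.inl f g, Amalgam.inr f g,
    cD.le_closure, cD.monotone, cD.idempotent,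
    fun a ↦ (Amalgam.closure_inl (cA := clA) (hg := hgc) a).symm,
    fun b ↦ (Amalgam.closure_inr (cB := clB) (hf := hfc) b).symm,
    Amalgam.inl_map_eq_inr_map, fun _ _ ↦ Amalgam.exists_eq_of_inl_eq_inr,
    fun _ _ ↦ Amalgam.inl_le_inr_iff.1, fun _ _ ↦ Amalgam.inr_le_inl_iff.1⟩

/-- The class of posets equipped with a closure operation has the
superamalgamation property. -/
theorem poset_with_closure_superamalgamation {A B C : Type u}
    [PartialOrder A] [PartialOrder B] [PartialOrder C]
    (cA : A → A) (cB : B → B) (cC : C → C)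
    (hAext : ∀ x, x ≤ cA x) (hAmono : Monotone cA) (hAidem : ∀ x, cA (cA x) = cA x)
    (hBext : ∀ x, x ≤ cB x) (hBmono : Monotone cB) (hBidem : ∀ x, cB (cB x) = cB x)
    (hCext : ∀ x, x ≤ cC x) (hCmono : Monotone cC) (hCidem : ∀ x, cC (cC x) = cC x)
    (f : C ↪o A) (g : C ↪o B)
    (hfc : ∀ x, f (cC x) = cA (f x)) (hgc : ∀ x, g (cC x) = cB (g x)) :
    ∃ (D : Type u) (_ : PartialOrder D) (cD : D → D) (h : A ↪o D) (k : B ↪o D),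
      (∀ x, x ≤ cD x) ∧ Monotone cD ∧ (∀ x, cD (cD x) = cD x) ∧
      (∀ a, h (cA a) = cD (h a)) ∧ (∀ b, k (cB b) = cD (k b)) ∧
      (∀ c, h (f c) = k (g c)) ∧
      (∀ a b, h a = k b → ∃ c, a = f c ∧ b = g c) ∧
      (∀ a b, h a ≤ k b → ∃ c, a ≤ f c ∧ g c ≤ b) ∧
      (∀ a b, k b ≤ h a → ∃ c, b ≤ g c ∧ f c ≤ a) :=
  poset_with_closure_superamalgamation_general cA cB cC hAext hAmono hAidem hBext hBmono hBidem f g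
    hfc hgc
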